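/- With M_{n−2} = ∑_j ln|x_j| θ_j∂_{θ_j}(x_j∂_j)^{n−1}, one has [H_n, M_m] = n I_{n+m}, where H_n = ∑_j(x_j∂_j)^n and I_k = ∑_j θ_j∂_{θ_j}(x_j∂_j)^k; consequently J_n := H_n L_0 − H_1 L_{n−1} and K_{n−1} := I_n M_0 − I_1 M_{n−1} commute with H_1. -/

import Mathlib

open Finset

/-- A superfunction, encoded by its coefficient functions on fermionic monomials `θ_T`. -/
abbrev SF (N : ℕ) := Finset (Fin N) → (Fin N → ℝ) → ℝ

/-- Partial derivative `∂_{x_j}`. -/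
noncomputable def pd {N : ℕ} (j : Fin N) (f : (Fin N → ℝ) → ℝ) : (Fin N → ℝ) → ℝ :=
  fun t' => deriv (fun t => f (Function.update t' j t)) (t' j)

/-- The Euler operator `x_j ∂_j`. -/
noncomputable def Eul {N : ℕ} (j : Fin N) : ((Fin N → ℝ) → ℝ) → ((Fin N → ℝ) → ℝ) :=
  fun f x => x j * pd j f x

/-- `H_n = ∑_j (x_j ∂_j)^n`. -/
noncomputable def HS {N : ℕ} (n : ℕ) (F : SF N) : SF N :=
  fun T x => ∑ j, (Eul j)^[n] (F T) x

/-- `I_k = ∑_j θ_j ∂_{θ_j} (x_j ∂_j)^k`. -/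
noncomputable def IS {N : ℕ} (k : ℕ) (F : SF N) : SF N :=
  fun T x => ∑ j ∈ T, (Eul j)^[k] (F T) x

/-- `L_m = ∑_j ln|x_j| (x_j ∂_j)^{m+1}` (so that `L_{n-2} = ∑_j ln|x_j|(x_j∂_j)^{n-1}`). -/
noncomputable def LS {N : ℕ} (m : ℕ) (F : SF N) : SF N :=
  fun T x => ∑ j, Real.log |x j| * (Eul j)^[m + 1] (F T) x

/-- `M_m = ∑_j ln|x_j| θ_j∂_{θ_j} (x_j ∂_j)^{m+1}` (so that
`M_{n-2} = ∑_j ln|x_j|θ_j∂_{θ_j}(x_j∂_j)^{n-1}`). -/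
noncomputable def MS {N : ℕ} (m : ℕ) (F : SF N) : SF N :=
  fun T x => ∑ j ∈ T, Real.log |x j| * (Eul j)^[m + 1] (F T) x

/-- `J_n = H_n L_0 − H_1 L_{n−1}`. -/
noncomputable def JS {N : ℕ} (n : ℕ) (F : SF N) : SF N :=
  fun T x => HS n (LS 0 F) T x - HS 1 (LS (n - 1) F) T x

/-- `K_{n−1} = I_n M_0 − I_1 M_{n−1}`. -/
noncomputable def KS {N : ℕ} (n : ℕ) (F : SF N) : SF N :=
  fun T x => IS n (MS 0 F) T x - IS 1 (MS (n - 1) F) T x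

section Aux
variable {N : ℕ}

lemma updHasDerivAt (x : Fin N → ℝ) (j : Fin N) (t : ℝ) :
    HasDerivAt (fun s : ℝ => Function.update x j s) (Pi.single j 1) t := by
  rw [hasDerivAt_pi]
  intro i
  rcases eq_or_ne i j with rfl | hij
  · simpa using hasDerivAt_id' t
  · simpa [Function.update_of_ne hij, Pi.single_eq_of_ne hij] using hasDerivAt_const t (x i)

lemma hasDerivAt_comp_update {f : (Fin N → ℝ) → ℝ} {x : Fin N → ℝ} {j : Fin N} {t : ℝ}
    (hf : DifferentiableAt ℝ f (Function.update x j t)) :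
    HasDerivAt (fun s : ℝ => f (Function.update x j s))
      (fderiv ℝ f (Function.update x j t) (Pi.single j 1)) t :=
  hf.hasFDerivAt.comp_hasDerivAt t (updHasDerivAt x j t)

lemma pd_apply {f : (Fin N → ℝ) → ℝ} {x : Fin N → ℝ} (j : Fin N)
    (hf : DifferentiableAt ℝ f x) :
    pd j f x = fderiv ℝ f x (Pi.single j 1) := by
  have h : DifferentiableAt ℝ f (Function.update x j (x j)) := by
    rwa [Function.update_eq_self]
  have h2 := hasDerivAt_comp_update h
  rw [Function.update_eq_self] at h2
  exact h2.deriv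

lemma hasDerivAt_pd {f : (Fin N → ℝ) → ℝ} (hf : Differentiable ℝ f) (x : Fin N → ℝ)
    (j : Fin N) (t : ℝ) :
    HasDerivAt (fun s : ℝ => f (Function.update x j s))
      (pd j f (Function.update x j t)) t := by
  rw [pd_apply j (hf _)]
  exact hasDerivAt_comp_update (hf _)

lemma pd_contDiff {f : (Fin N → ℝ) → ℝ} (hf : ContDiff ℝ (⊤ : ℕ∞) f) (j : Fin N) :
    ContDiff ℝ (⊤ : ℕ∞) (pd j f) := by
  have h : pd j f = fun x => fderiv ℝ f x (Pi.single j 1) :=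
    funext fun x => pd_apply j ((hf.differentiable (by simp)) x)
  rw [h]
  exact (hf.fderiv_right (by simp)).clm_apply contDiff_const

lemma eul_contDiff {f : (Fin N → ℝ) → ℝ} (hf : ContDiff ℝ (⊤ : ℕ∞) f) (j : Fin N) :
    ContDiff ℝ (⊤ : ℕ∞) (Eul j f) :=
  ((ContinuousLinearMap.proj j : (Fin N → ℝ) →L[ℝ] ℝ).contDiff).mul (pd_contDiff hf j)

lemma eul_iter_contDiff {f : (Fin N → ℝ) → ℝ} (hf : ContDiff ℝ (⊤ : ℕ∞) f) (j : Fin N) (n : ℕ) :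
    ContDiff ℝ (⊤ : ℕ∞) ((Eul j)^[n] f) := by
  induction n with
  | zero => exact hf
  | succ n ih => rw [Function.iterate_succ_apply']; exact eul_contDiff ih j

lemma pd_comm {f : (Fin N → ℝ) → ℝ} (hf : ContDiff ℝ (⊤ : ℕ∞) f) (i j : Fin N) (x : Fin N → ℝ) :
    pd i (pd j f) x = pd j (pd i f) x := by
  have hd : Differentiable ℝ f := hf.differentiable (by simp)
  have h2 : DifferentiableAt ℝ (fderiv ℝ f) x :=
    ((hf.fderiv_right (m := 1) (WithTop.coe_le_coe.mpr le_top)).differentiable (by simp)) x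
  have key : ∀ a b : Fin N,
      pd a (pd b f) x = fderiv ℝ (fderiv ℝ f) x (Pi.single a 1) (Pi.single b 1) := by
    intro a b
    rw [pd_apply a ((pd_contDiff hf b).differentiable (by simp) x)]
    have hb : pd b f = fun y => fderiv ℝ f y (Pi.single b 1) :=
      funext fun y => pd_apply b (hd y)
    rw [hb, fderiv_clm_apply h2 (differentiableAt_const _)]
    simp
  rw [key i j, key j i]
  exact second_derivative_symmetric (fun y => (hd y).hasFDerivAt) h2.hasFDerivAt _ _

lemma eul_comm {f : (Fin N → ℝ) → ℝ} (hf : ContDiff ℝ (⊤ : ℕ∞) f) (i j : Fin N) :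
    Eul i (Eul j f) = Eul j (Eul i f) := by
  rcases eq_or_ne i j with rfl | hij
  · rfl
  · funext x
    have key : ∀ a b : Fin N, a ≠ b → Eul a (Eul b f) x = x a * x b * pd a (pd b f) x := by
      intro a b hab
      show x a * pd a (fun y => y b * pd b f y) x = _
      have h1 : pd a (fun y => y b * pd b f y) x = x b * pd a (pd b f) x := by
        show deriv (fun t => (Function.update x a t) b * pd b f (Function.update x a t)) (x a) = _
        have h2 : (fun t : ℝ => (Function.update x a t) b * pd b f (Function.update x a t))
            = fun t => x b * pd b f (Function.update x a t) := by
          funext t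
          rw [Function.update_of_ne (Ne.symm hab)]
        rw [h2, deriv_const_mul_field]
        rfl
      rw [h1]; ring
    rw [key i j hij, key j i hij.symm, pd_comm hf]
    ring

lemma eul_comm_iter {f : (Fin N → ℝ) → ℝ} (hf : ContDiff ℝ (⊤ : ℕ∞) f) (i j : Fin N) (n : ℕ) :
    Eul i ((Eul j)^[n] f) = (Eul j)^[n] (Eul i f) := by
  induction n generalizing f with
  | zero => rfl
  | succ n ih =>
    rw [Function.iterate_succ_apply, Function.iterate_succ_apply]
    rw [ih (eul_contDiff hf j), eul_comm hf i j]

lemma eul_iter_comm {f : (Fin N → ℝ) → ℝ} (hf : ContDiff ℝ (⊤ : ℕ∞) f) (i j : Fin N) (a b : ℕ) :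
    (Eul i)^[a] ((Eul j)^[b] f) = (Eul j)^[b] ((Eul i)^[a] f) := by
  induction a generalizing f with
  | zero => rfl
  | succ a ih =>
    rw [Function.iterate_succ_apply, Function.iterate_succ_apply]
    rw [eul_comm_iter hf i j b, ih (eul_contDiff hf i)]

end Aux

section Aux2
variable {N : ℕ}

lemma pd_const_mul (c : ℝ) (f : (Fin N → ℝ) → ℝ) (j : Fin N) (x : Fin N → ℝ) :
    pd j (fun y => c * f y) x = c * pd j f x :=
  deriv_const_mul_field c

lemma eul_const_mul (c : ℝ) (f : (Fin N → ℝ) → ℝ) (j : Fin N) (x : Fin N → ℝ) :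
    Eul j (fun y => c * f y) x = c * Eul j f x := by
  show x j * pd j (fun y => c * f y) x = c * (x j * pd j f x)
  rw [pd_const_mul]; ring

lemma eul_add {f g : (Fin N → ℝ) → ℝ} (hf : Differentiable ℝ f) (hg : Differentiable ℝ g)
    (j : Fin N) (x : Fin N → ℝ) :
    Eul j (fun y => f y + g y) x = Eul j f x + Eul j g x := by
  have h := (hasDerivAt_pd hf x j (x j)).fun_add (hasDerivAt_pd hg x j (x j))
  rw [Function.update_eq_self] at h
  show x j * deriv (fun t => f (Function.update x j t) + g (Function.update x j t)) (x j) = _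
  rw [h.deriv]
  show _ = x j * pd j f x + x j * pd j g x
  ring

lemma eul_sub {f g : (Fin N → ℝ) → ℝ} (hf : Differentiable ℝ f) (hg : Differentiable ℝ g)
    (j : Fin N) (x : Fin N → ℝ) :
    Eul j (fun y => f y - g y) x = Eul j f x - Eul j g x := by
  have h := (hasDerivAt_pd hf x j (x j)).fun_sub (hasDerivAt_pd hg x j (x j))
  rw [Function.update_eq_self] at h
  show x j * deriv (fun t => f (Function.update x j t) - g (Function.update x j t)) (x j) = _
  rw [h.deriv]
  show _ = x j * pd j f x - x j * pd j g x
  ring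

lemma eul_sum {ι : Type*} {S : Finset ι} {f : ι → (Fin N → ℝ) → ℝ}
    (hf : ∀ i ∈ S, Differentiable ℝ (f i)) (j : Fin N) (x : Fin N → ℝ) :
    Eul j (fun y => ∑ i ∈ S, f i y) x = ∑ i ∈ S, Eul j (f i) x := by
  have h := HasDerivAt.fun_sum (fun i hi => hasDerivAt_pd (hf i hi) x j (x j))
  rw [Function.update_eq_self] at h
  show x j * deriv (fun t => ∑ i ∈ S, f i (Function.update x j t)) (x j) = _
  rw [h.deriv, Finset.mul_sum]
  rfl

lemma eul_iter_sum {ι : Type*} {S : Finset ι} {f : ι → (Fin N → ℝ) → ℝ}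
    (hf : ∀ i ∈ S, ContDiff ℝ (⊤ : ℕ∞) (f i)) (j : Fin N) (n : ℕ) :
    (Eul j)^[n] (fun y => ∑ i ∈ S, f i y) = fun x => ∑ i ∈ S, (Eul j)^[n] (f i) x := by
  induction n with
  | zero => rfl
  | succ n ih =>
    funext x
    rw [Function.iterate_succ_apply', ih,
      eul_sum (fun i hi => (eul_iter_contDiff (hf i hi) j n).differentiable (by simp)) j x]
    exact Finset.sum_congr rfl fun i _ =>
      (congrFun (Function.iterate_succ_apply' (Eul j) n (f i)) x).symm

lemma eul_zero_fun (k : Fin N) : Eul k (fun _ => (0 : ℝ)) = fun _ => (0 : ℝ) := by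
  funext x
  show x k * deriv (fun _ : ℝ => (0:ℝ)) (x k) = 0
  simp

lemma eul_iter_zero (k : Fin N) (n : ℕ) :
    (Eul k)^[n] (fun _ : Fin N → ℝ => (0 : ℝ)) = fun _ => (0 : ℝ) := by
  induction n with
  | zero => rfl
  | succ n ih => rw [Function.iterate_succ_apply', ih, eul_zero_fun]

lemma eul_congrOn {f g : (Fin N → ℝ) → ℝ}
    (h : ∀ y : Fin N → ℝ, (∀ j, y j ≠ 0) → f y = g y)
    {x : Fin N → ℝ} (hx : ∀ j, x j ≠ 0) (k : Fin N) : Eul k f x = Eul k g x := by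
  have he : (fun t => f (Function.update x k t)) =ᶠ[nhds (x k)]
      (fun t => g (Function.update x k t)) := by
    have ht : ∀ᶠ t : ℝ in nhds (x k), t ≠ 0 := eventually_ne_nhds (hx k)
    filter_upwards [ht] with t htt
    apply h
    intro i
    rcases eq_or_ne i k with rfl | hik
    · simpa using htt
    · simpa [Function.update_apply, hik] using hx i
  show x k * deriv _ (x k) = x k * deriv _ (x k)
  rw [he.deriv_eq]

end Aux2

section NF
variable {N : ℕ}

lemma NFstep {g0 : (Fin N → ℝ) → ℝ} {g : Fin N → (Fin N → ℝ) → ℝ}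
    (hg0 : Differentiable ℝ g0) (hg : ∀ i, Differentiable ℝ (g i))
    (S : Finset (Fin N)) (k : Fin N) {x : Fin N → ℝ} (hx : ∀ j, x j ≠ 0) :
    Eul k (fun y => g0 y + ∑ i ∈ S, Real.log |y i| * g i y) x
      = Eul k g0 x + (if k ∈ S then (1:ℝ) else 0) * g k x
        + ∑ i ∈ S, Real.log |x i| * Eul k (g i) x := by
  have hD : ∀ i ∈ S, HasDerivAt
      (fun t : ℝ => Real.log |Function.update x k t i| * g i (Function.update x k t))
      ((if i = k then (x k)⁻¹ * g i x else 0) + Real.log |x i| * pd k (g i) x) (x k) := by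
    intro i _
    have h2 := hasDerivAt_pd (hg i) x k (x k)
    rw [Function.update_eq_self] at h2
    rcases eq_or_ne i k with rfl | hik
    · simp only [if_pos rfl, Function.update_self]
      have h1 : HasDerivAt (fun t : ℝ => Real.log |t|) (x i)⁻¹ (x i) := by
        refine (Real.hasDerivAt_log (hx i)).congr_of_eventuallyEq ?_
        exact Filter.Eventually.of_forall fun t => Real.log_abs t
      simpa [Function.update_eq_self] using h1.fun_mul h2
    · simp only [Function.update_of_ne hik, if_neg hik, zero_add]
      exact h2.const_mul (Real.log |x i|)
  have hbase := hasDerivAt_pd hg0 x k (x k)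
  rw [Function.update_eq_self] at hbase
  have hbig := hbase.fun_add (HasDerivAt.fun_sum hD)
  have hval : Eul k (fun y => g0 y + ∑ i ∈ S, Real.log |y i| * g i y) x
      = x k * (pd k g0 x + ∑ i ∈ S,
          ((if i = k then (x k)⁻¹ * g i x else 0) + Real.log |x i| * pd k (g i) x)) := by
    show x k * deriv _ (x k) = _
    rw [hbig.deriv]
  rw [hval, Finset.sum_add_distrib, Finset.sum_ite_eq' S k (fun i => (x k)⁻¹ * g i x)]
  show _ = x k * pd k g0 x + (if k ∈ S then (1:ℝ) else 0) * g k x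
      + ∑ i ∈ S, Real.log |x i| * (x k * pd k (g i) x)
  have hsum : ∑ i ∈ S, Real.log |x i| * (x k * pd k (g i) x)
      = x k * ∑ i ∈ S, Real.log |x i| * pd k (g i) x := by
    rw [Finset.mul_sum]; exact Finset.sum_congr rfl fun i _ => by ring
  rw [hsum]
  have hk : x k * (if k ∈ S then (x k)⁻¹ * g k x else 0)
      = (if k ∈ S then (1:ℝ) else 0) * g k x := by
    split_ifs with h
    · rw [one_mul, mul_inv_cancel_left₀ (hx k)]
    · ring
  rw [mul_add, mul_add, hk]
  ring

lemma NFiter {g0 : (Fin N → ℝ) → ℝ} {g : Fin N → (Fin N → ℝ) → ℝ}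
    (hg0 : ContDiff ℝ (⊤ : ℕ∞) g0) (hg : ∀ i, ContDiff ℝ (⊤ : ℕ∞) (g i))
    (S : Finset (Fin N)) (k : Fin N) (p : ℕ) {x : Fin N → ℝ} (hx : ∀ j, x j ≠ 0) :
    (Eul k)^[p+1] (fun y => g0 y + ∑ i ∈ S, Real.log |y i| * g i y) x
      = (Eul k)^[p+1] g0 x
        + (if k ∈ S then (1:ℝ) else 0) * (((p:ℝ)+1) * (Eul k)^[p] (g k) x)
        + ∑ i ∈ S, Real.log |x i| * (Eul k)^[p+1] (g i) x := by
  induction p generalizing x with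
  | zero =>
    simpa using NFstep (hg0.differentiable (by simp))
      (fun i => (hg i).differentiable (by simp)) S k hx
  | succ p ih =>
    set c : ℝ := if k ∈ S then (1:ℝ) else 0 with hc
    rw [Function.iterate_succ_apply']
    have hrep : Eul k ((Eul k)^[p+1] (fun y => g0 y + ∑ i ∈ S, Real.log |y i| * g i y)) x
        = Eul k (fun y => ((Eul k)^[p+1] g0 y + (c * ((p:ℝ)+1)) * (Eul k)^[p] (g k) y)
            + ∑ i ∈ S, Real.log |y i| * (Eul k)^[p+1] (g i) y) x := by
      refine eul_congrOn (fun y hy => ?_) hx k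
      rw [ih hy]
      ring
    rw [hrep]
    have hA : Differentiable ℝ (fun y => (Eul k)^[p+1] g0 y
        + (c * ((p:ℝ)+1)) * (Eul k)^[p] (g k) y) :=
      ((eul_iter_contDiff hg0 k (p+1)).differentiable (by simp)).add
        (((eul_iter_contDiff (hg k) k p).differentiable (by simp)).const_mul _)
    rw [NFstep hA (fun i => (eul_iter_contDiff (hg i) k (p+1)).differentiable (by simp)) S k hx]
    rw [eul_add ((eul_iter_contDiff hg0 k (p+1)).differentiable (by simp))
      (((eul_iter_contDiff (hg k) k p).differentiable (by simp)).const_mul _) k x]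
    rw [eul_const_mul]
    have e1 : Eul k ((Eul k)^[p+1] g0) x = (Eul k)^[p+1+1] g0 x :=
      (congrFun (Function.iterate_succ_apply' (Eul k) (p+1) g0) x).symm
    have e2 : Eul k ((Eul k)^[p] (g k)) x = (Eul k)^[p+1] (g k) x :=
      (congrFun (Function.iterate_succ_apply' (Eul k) p (g k)) x).symm
    have e3 : ∀ i ∈ S, Real.log |x i| * Eul k ((Eul k)^[p+1] (g i)) x
        = Real.log |x i| * (Eul k)^[p+1+1] (g i) x := fun i _ => by
      rw [(congrFun (Function.iterate_succ_apply' (Eul k) (p+1) (g i)) x).symm]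
    rw [e1, e2, Finset.sum_congr rfl e3]
    push_cast
    ring
  end NF

section Sum
variable {N : ℕ}

lemma sum_NFiter {g0 : (Fin N → ℝ) → ℝ} {g : Fin N → (Fin N → ℝ) → ℝ}
    (hg0 : ContDiff ℝ (⊤ : ℕ∞) g0) (hg : ∀ i, ContDiff ℝ (⊤ : ℕ∞) (g i))
    {S' S : Finset (Fin N)} (hSS : S ⊆ S') (p : ℕ) {x : Fin N → ℝ} (hx : ∀ j, x j ≠ 0) :
    ∑ j ∈ S', (Eul j)^[p+1] (fun y => g0 y + ∑ i ∈ S, Real.log |y i| * g i y) x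
      = ∑ j ∈ S', (Eul j)^[p+1] g0 x
        + ((p:ℝ)+1) * ∑ j ∈ S, (Eul j)^[p] (g j) x
        + ∑ i ∈ S, Real.log |x i| * ∑ j ∈ S', (Eul j)^[p+1] (g i) x := by
  rw [Finset.sum_congr rfl (fun j _ => NFiter hg0 hg S j p hx)]
  rw [Finset.sum_add_distrib, Finset.sum_add_distrib]
  congr 1
  · congr 1
    have h1 : ∀ j ∈ S', (if j ∈ S then (1:ℝ) else 0) * (((p:ℝ)+1) * (Eul j)^[p] (g j) x)
        = (if j ∈ S then ((p:ℝ)+1) * (Eul j)^[p] (g j) x else 0) := by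
      intro j _
      split_ifs <;> ring
    rw [Finset.sum_congr rfl h1, Finset.sum_ite_mem,
      Finset.inter_eq_right.mpr hSS, Finset.mul_sum]
  · rw [Finset.sum_comm]
    exact Finset.sum_congr rfl fun i _ => (Finset.mul_sum _ _ _).symm

lemma comm_HM {f : (Fin N → ℝ) → ℝ} (hf : ContDiff ℝ (⊤ : ℕ∞) f) (S : Finset (Fin N)) (p m : ℕ)
    {x : Fin N → ℝ} (hx : ∀ j, x j ≠ 0) :
    ∑ j, (Eul j)^[p+1] (fun y => ∑ i ∈ S, Real.log |y i| * (Eul i)^[m+1] f y) x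
      - ∑ i ∈ S, Real.log |x i| * (Eul i)^[m+1] (fun y => ∑ j, (Eul j)^[p+1] f y) x
      = ((p:ℝ)+1) * ∑ j ∈ S, (Eul j)^[p+1+m] f x := by
  have h0 : (fun y => ∑ i ∈ S, Real.log |y i| * (Eul i)^[m+1] f y)
      = fun y => (fun _ : Fin N → ℝ => (0:ℝ)) y
          + ∑ i ∈ S, Real.log |y i| * (Eul i)^[m+1] f y := by
    funext y; rw [zero_add]
  rw [h0, sum_NFiter contDiff_const (fun i => eul_iter_contDiff hf i (m+1))
    (Finset.subset_univ S) p hx]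
  simp only [eul_iter_zero]
  simp only [Finset.sum_const_zero, zero_add]
  have hd : ∀ j ∈ S, (Eul j)^[p] ((Eul j)^[m+1] f) x = (Eul j)^[p+1+m] f x := by
    intro j _
    have hpm : p + 1 + m = p + (m + 1) := by omega
    rw [hpm]
    exact congrFun (Function.iterate_add_apply (Eul j) p (m+1) f).symm x
  rw [Finset.sum_congr rfl hd]
  have hc : ∀ i ∈ S, Real.log |x i| * (Eul i)^[m+1] (fun y => ∑ j, (Eul j)^[p+1] f y) x
      = Real.log |x i| * ∑ j, (Eul j)^[p+1] ((Eul i)^[m+1] f) x := by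
    intro i _
    rw [eul_iter_sum (fun j _ => eul_iter_contDiff hf j (p+1)) i (m+1)]
    congr 1
    exact Finset.sum_congr rfl fun j _ => by rw [eul_iter_comm hf i j (m+1) (p+1)]
  rw [Finset.sum_congr rfl hc]
  ring

end Sum

section BigJ
variable {N : ℕ}

lemma swapA {f : (Fin N → ℝ) → ℝ} (hf : ContDiff ℝ (⊤ : ℕ∞) f) (S : Finset (Fin N)) (q : ℕ)
    (x : Fin N → ℝ) :
    ∑ k, Eul k (fun y => ∑ j ∈ S, (Eul j)^[q] f y) x
      = ∑ j ∈ S, (Eul j)^[q] (fun y => ∑ l, Eul l f y) x := by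
  have h1 : ∀ k : Fin N, Eul k (fun y => ∑ j ∈ S, (Eul j)^[q] f y) x
      = ∑ j ∈ S, (Eul j)^[q] (Eul k f) x := by
    intro k
    rw [eul_sum (fun j _ => (eul_iter_contDiff hf j q).differentiable (by simp)) k x]
    exact Finset.sum_congr rfl fun j _ => congrFun (eul_comm_iter hf k j q) x
  rw [Finset.sum_congr rfl fun k _ => h1 k, Finset.sum_comm]
  exact Finset.sum_congr rfl fun j _ => by
    rw [eul_iter_sum (fun l _ => eul_contDiff hf l) j q]

lemma cancelS {f : (Fin N → ℝ) → ℝ} (hf : ContDiff ℝ (⊤ : ℕ∞) f) (S : Finset (Fin N)) (p : ℕ)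
    (x : Fin N → ℝ) :
    ∑ k ∈ S, (∑ j ∈ S, (Eul j)^[p+1] (Eul k f) x - ∑ j ∈ S, Eul j ((Eul k)^[p+1] f) x) = 0 := by
  rw [Finset.sum_sub_distrib, sub_eq_zero]
  have h1 : ∀ k ∈ S, ∑ j ∈ S, (Eul j)^[p+1] (Eul k f) x
      = ∑ j ∈ S, Eul k ((Eul j)^[p+1] f) x := fun k _ =>
    Finset.sum_congr rfl fun j _ => (congrFun (eul_comm_iter hf k j (p+1)) x).symm
  rw [Finset.sum_congr rfl h1, Finset.sum_comm]

lemma swapC {f : (Fin N → ℝ) → ℝ} (hf : ContDiff ℝ (⊤ : ℕ∞) f) (S : Finset (Fin N)) (p : ℕ)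
    (i : Fin N) (x : Fin N → ℝ) :
    ∑ k, Eul k (fun y => ∑ j ∈ S, (Eul j)^[p+1] (Eul i f) y
        - ∑ j ∈ S, Eul j ((Eul i)^[p+1] f) y) x
      = ∑ j ∈ S, (Eul j)^[p+1] (Eul i (fun y => ∑ l, Eul l f y)) x
        - ∑ j ∈ S, Eul j ((Eul i)^[p+1] (fun y => ∑ l, Eul l f y)) x := by
  have hPd : Differentiable ℝ (fun y => ∑ j ∈ S, (Eul j)^[p+1] (Eul i f) y) :=
    (ContDiff.sum fun j _ => eul_iter_contDiff (eul_contDiff hf i) j (p+1)).differentiable (by simp)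
  have hQd : Differentiable ℝ (fun y => ∑ j ∈ S, Eul j ((Eul i)^[p+1] f) y) :=
    (ContDiff.sum fun j _ => eul_contDiff (eul_iter_contDiff hf i (p+1)) j).differentiable (by simp)
  have hsplit : ∀ k : Fin N, Eul k (fun y => ∑ j ∈ S, (Eul j)^[p+1] (Eul i f) y
      - ∑ j ∈ S, Eul j ((Eul i)^[p+1] f) y) x
      = Eul k (fun y => ∑ j ∈ S, (Eul j)^[p+1] (Eul i f) y) x
        - Eul k (fun y => ∑ j ∈ S, Eul j ((Eul i)^[p+1] f) y) x :=
    fun k => eul_sub hPd hQd k x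
  rw [Finset.sum_congr rfl fun k _ => hsplit k, Finset.sum_sub_distrib]
  congr 1
  · have hfun : Eul i (fun y => ∑ l, Eul l f y) = fun y => ∑ l, Eul l (Eul i f) y := by
      funext z
      rw [eul_sum (fun l _ => (eul_contDiff hf l).differentiable (by simp)) i z]
      exact Finset.sum_congr rfl fun l _ => congrFun (eul_comm hf i l) z
    rw [hfun]
    exact swapA (eul_contDiff hf i) S (p+1) x
  · have hfun2 : (Eul i)^[p+1] (fun y => ∑ l, Eul l f y)
        = fun y => ∑ l, Eul l ((Eul i)^[p+1] f) y := by
      rw [eul_iter_sum (fun l _ => eul_contDiff hf l) i (p+1)]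
      funext z
      exact Finset.sum_congr rfl fun l _ => (congrFun (eul_comm_iter hf l i (p+1)) z).symm
    rw [hfun2]
    exact swapA (eul_iter_contDiff hf i (p+1)) S 1 x

end BigJ

noncomputable def BigJ {N : ℕ} (S : Finset (Fin N)) (p : ℕ) (f : (Fin N → ℝ) → ℝ) :
    (Fin N → ℝ) → ℝ :=
  fun y => ∑ j ∈ S, (Eul j)^[p+1] (fun z => ∑ i ∈ S, Real.log |z i| * Eul i f z) y
         - ∑ j ∈ S, Eul j (fun z => ∑ i ∈ S, Real.log |z i| * (Eul i)^[p+1] f z) y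

lemma BigJ_apply {N : ℕ} (S : Finset (Fin N)) (p : ℕ) (f : (Fin N → ℝ) → ℝ) :
    BigJ S p f = fun y => ∑ j ∈ S, (Eul j)^[p+1] (fun z => ∑ i ∈ S, Real.log |z i| * Eul i f z) y
         - ∑ j ∈ S, Eul j (fun z => ∑ i ∈ S, Real.log |z i| * (Eul i)^[p+1] f z) y := rfl

section BigJ2
variable {N : ℕ}

lemma bigJ_rep (S : Finset (Fin N)) (p : ℕ) {h : (Fin N → ℝ) → ℝ} (hh : ContDiff ℝ (⊤ : ℕ∞) h)
    {y : Fin N → ℝ} (hy : ∀ j, y j ≠ 0) :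
    BigJ S p h y
      = (((p:ℝ)+1) * (∑ j ∈ S, (Eul j)^[p+1] h y) - ∑ j ∈ S, (Eul j)^[p+1] h y)
        + ∑ i ∈ S, Real.log |y i|
            * (∑ j ∈ S, (Eul j)^[p+1] (Eul i h) y - ∑ j ∈ S, Eul j ((Eul i)^[p+1] h) y) := by
  have hiter : ∀ j : Fin N, (Eul j)^[p] (Eul j h) = (Eul j)^[p+1] h :=
    fun j => (Function.iterate_succ_apply (Eul j) p h).symm
  have h1 := sum_NFiter (g0 := fun _ : Fin N → ℝ => (0:ℝ)) (g := fun i => Eul i h)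
    contDiff_const (fun i => eul_contDiff hh i) (Finset.Subset.refl S) p hy
  simp only [eul_iter_zero, Finset.sum_const_zero, zero_add, hiter] at h1
  have h2 := sum_NFiter (g0 := fun _ : Fin N → ℝ => (0:ℝ)) (g := fun i => (Eul i)^[p+1] h)
    contDiff_const (fun i => eul_iter_contDiff hh i (p+1)) (Finset.Subset.refl S) 0 hy
  simp only [eul_iter_zero, Finset.sum_const_zero, zero_add, Nat.cast_zero, one_mul,
    Function.iterate_one, Function.iterate_zero_apply] at h2
  show (∑ j ∈ S, (Eul j)^[p+1] (fun z => ∑ i ∈ S, Real.log |z i| * Eul i h z) y)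
      - ∑ j ∈ S, Eul j (fun z => ∑ i ∈ S, Real.log |z i| * (Eul i)^[p+1] h z) y = _
  rw [h1, h2]
  have h3 : ∑ i ∈ S, Real.log |y i|
      * (∑ j ∈ S, (Eul j)^[p+1] (Eul i h) y - ∑ j ∈ S, Eul j ((Eul i)^[p+1] h) y)
      = ∑ i ∈ S, Real.log |y i| * ∑ j ∈ S, (Eul j)^[p+1] (Eul i h) y
        - ∑ i ∈ S, Real.log |y i| * ∑ j ∈ S, Eul j ((Eul i)^[p+1] h) y := by
    rw [← Finset.sum_sub_distrib]
    exact Finset.sum_congr rfl fun i _ => by ring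
  rw [h3]
  ring

lemma bigJ_comm (S : Finset (Fin N)) (p : ℕ) {f : (Fin N → ℝ) → ℝ}
    (hf : ContDiff ℝ (⊤ : ℕ∞) f) {x : Fin N → ℝ} (hx : ∀ j, x j ≠ 0) :
    ∑ k, Eul k (BigJ S p f) x = BigJ S p (fun y => ∑ l, Eul l f y) x := by
  have hf1 : ContDiff ℝ (⊤ : ℕ∞) (fun y : Fin N → ℝ => ∑ l, Eul l f y) :=
    ContDiff.sum fun l _ => eul_contDiff hf l
  have hAc : ContDiff ℝ (⊤ : ℕ∞) (fun y => ∑ j ∈ S, (Eul j)^[p+1] f y) :=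
    ContDiff.sum fun j _ => eul_iter_contDiff hf j (p+1)
  have hG0d : Differentiable ℝ
      (fun y => ((p:ℝ)+1) * (∑ j ∈ S, (Eul j)^[p+1] f y) - ∑ j ∈ S, (Eul j)^[p+1] f y) :=
    ((hAc.differentiable (by simp)).const_mul _).sub (hAc.differentiable (by simp))
  have hGc : ∀ i : Fin N, ContDiff ℝ (⊤ : ℕ∞)
      (fun y => ∑ j ∈ S, (Eul j)^[p+1] (Eul i f) y - ∑ j ∈ S, Eul j ((Eul i)^[p+1] f) y) :=
    fun i => (ContDiff.sum fun j _ => eul_iter_contDiff (eul_contDiff hf i) j (p+1)).sub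
      (ContDiff.sum fun j _ => eul_contDiff (eul_iter_contDiff hf i (p+1)) j)
  have hLk : ∀ k : Fin N, Eul k (BigJ S p f) x
      = Eul k (fun y => (((p:ℝ)+1) * (∑ j ∈ S, (Eul j)^[p+1] f y) - ∑ j ∈ S, (Eul j)^[p+1] f y)
          + ∑ i ∈ S, Real.log |y i|
              * (∑ j ∈ S, (Eul j)^[p+1] (Eul i f) y - ∑ j ∈ S, Eul j ((Eul i)^[p+1] f) y)) x :=
    fun k => eul_congrOn (fun y hy => bigJ_rep S p hf hy) hx k
  have step : ∀ k : Fin N,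
      Eul k (fun y => (((p:ℝ)+1) * (∑ j ∈ S, (Eul j)^[p+1] f y) - ∑ j ∈ S, (Eul j)^[p+1] f y)
          + ∑ i ∈ S, Real.log |y i|
              * (∑ j ∈ S, (Eul j)^[p+1] (Eul i f) y - ∑ j ∈ S, Eul j ((Eul i)^[p+1] f) y)) x
        = Eul k (fun y => ((p:ℝ)+1) * (∑ j ∈ S, (Eul j)^[p+1] f y)
              - ∑ j ∈ S, (Eul j)^[p+1] f y) x
          + (if k ∈ S then (1:ℝ) else 0)
              * (∑ j ∈ S, (Eul j)^[p+1] (Eul k f) x - ∑ j ∈ S, Eul j ((Eul k)^[p+1] f) x)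
          + ∑ i ∈ S, Real.log |x i|
              * Eul k (fun y => ∑ j ∈ S, (Eul j)^[p+1] (Eul i f) y
                  - ∑ j ∈ S, Eul j ((Eul i)^[p+1] f) y) x :=
    fun k => NFstep hG0d (fun i => (hGc i).differentiable (by simp)) S k hx
  rw [Finset.sum_congr rfl fun k _ => (hLk k).trans (step k)]
  rw [Finset.sum_add_distrib, Finset.sum_add_distrib]
  -- piece 2 vanishes
  have piece2 : ∑ k, (if k ∈ S then (1:ℝ) else 0)
      * (∑ j ∈ S, (Eul j)^[p+1] (Eul k f) x - ∑ j ∈ S, Eul j ((Eul k)^[p+1] f) x) = 0 := by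
    have hite : ∀ k : Fin N, (if k ∈ S then (1:ℝ) else 0)
        * (∑ j ∈ S, (Eul j)^[p+1] (Eul k f) x - ∑ j ∈ S, Eul j ((Eul k)^[p+1] f) x)
        = (if k ∈ S then (∑ j ∈ S, (Eul j)^[p+1] (Eul k f) x
            - ∑ j ∈ S, Eul j ((Eul k)^[p+1] f) x) else 0) := by
      intro k; split_ifs <;> ring
    rw [Finset.sum_congr rfl fun k _ => hite k, Finset.sum_ite_mem, Finset.univ_inter]
    exact cancelS hf S p x
  -- piece 1
  have piece1 : ∑ k, Eul k (fun y => ((p:ℝ)+1) * (∑ j ∈ S, (Eul j)^[p+1] f y)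
        - ∑ j ∈ S, (Eul j)^[p+1] f y) x
      = ((p:ℝ)+1) * (∑ j ∈ S, (Eul j)^[p+1] (fun y => ∑ l, Eul l f y) x)
        - ∑ j ∈ S, (Eul j)^[p+1] (fun y => ∑ l, Eul l f y) x := by
    have hk : ∀ k : Fin N, Eul k (fun y => ((p:ℝ)+1) * (∑ j ∈ S, (Eul j)^[p+1] f y)
          - ∑ j ∈ S, (Eul j)^[p+1] f y) x
        = ((p:ℝ)+1) * Eul k (fun y => ∑ j ∈ S, (Eul j)^[p+1] f y) x
          - Eul k (fun y => ∑ j ∈ S, (Eul j)^[p+1] f y) x := by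
      intro k
      rw [eul_sub ((hAc.differentiable (by simp)).const_mul _) (hAc.differentiable (by simp)) k x,
        eul_const_mul]
    rw [Finset.sum_congr rfl fun k _ => hk k, Finset.sum_sub_distrib, ← Finset.mul_sum,
      swapA hf S (p+1) x]
  -- piece 3
  have piece3 : ∑ k, ∑ i ∈ S, Real.log |x i|
      * Eul k (fun y => ∑ j ∈ S, (Eul j)^[p+1] (Eul i f) y
          - ∑ j ∈ S, Eul j ((Eul i)^[p+1] f) y) x
      = ∑ i ∈ S, Real.log |x i|
          * (∑ j ∈ S, (Eul j)^[p+1] (Eul i (fun y => ∑ l, Eul l f y)) x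
            - ∑ j ∈ S, Eul j ((Eul i)^[p+1] (fun y => ∑ l, Eul l f y)) x) := by
    rw [Finset.sum_comm]
    refine Finset.sum_congr rfl fun i _ => ?_
    rw [← Finset.mul_sum, swapC hf S p i x]
  rw [piece1, piece2, piece3, bigJ_rep S p hf1 hx]
  ring
 end BigJ2



section ApplyLemmas
variable {N : ℕ}

lemma HS_apply (n : ℕ) (F : SF N) (T : Finset (Fin N)) :
    HS n F T = fun x => ∑ j, (Eul j)^[n] (F T) x := rfl

lemma IS_apply (k : ℕ) (F : SF N) (T : Finset (Fin N)) :
    IS k F T = fun x => ∑ j ∈ T, (Eul j)^[k] (F T) x := rfl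

lemma LS_apply (m : ℕ) (F : SF N) (T : Finset (Fin N)) :
    LS m F T = fun x => ∑ j, Real.log |x j| * (Eul j)^[m+1] (F T) x := rfl

lemma MS_apply (m : ℕ) (F : SF N) (T : Finset (Fin N)) :
    MS m F T = fun x => ∑ j ∈ T, Real.log |x j| * (Eul j)^[m+1] (F T) x := rfl

lemma JS_apply (n : ℕ) (F : SF N) (T : Finset (Fin N)) :
    JS n F T = fun x => HS n (LS 0 F) T x - HS 1 (LS (n-1) F) T x := rfl

lemma KS_apply (n : ℕ) (F : SF N) (T : Finset (Fin N)) :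
    KS n F T = fun x => IS n (MS 0 F) T x - IS 1 (MS (n-1) F) T x := rfl

end ApplyLemmas

/-- `[H_n, M_m] = n I_{n+m}`, and consequently
`J_n = H_n L_0 − H_1 L_{n−1}` and `K_{n−1} = I_n M_0 − I_1 M_{n−1}` commute with `H_1`
(on smooth superfunctions, away from the hyperplanes `x_j = 0`). -/
theorem extra_conserved_charges {N : ℕ} (n m : ℕ) (hn : 1 ≤ n) (F : SF N)
    (hF : ∀ T, ContDiff ℝ (⊤ : ℕ∞) (F T)) (T : Finset (Fin N)) (x : Fin N → ℝ)
    (hx : ∀ j, x j ≠ 0) :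
    HS n (MS m F) T x - MS m (HS n F) T x = (n : ℝ) * IS (n + m) F T x ∧
    HS 1 (JS n F) T x = JS n (HS 1 F) T x ∧
    HS 1 (KS n F) T x = KS n (HS 1 F) T x := by
  obtain ⟨p, rfl⟩ : ∃ p, n = p + 1 := ⟨n - 1, (Nat.succ_pred_eq_of_pos hn).symm⟩
  refine ⟨?_, ?_, ?_⟩
  · simp only [HS, HS_apply, MS_apply, IS_apply]
    rw [comm_HM (hF T) T p m hx]
    push_cast
    ring
  · calc HS 1 (JS (p+1) F) T x
        = ∑ k, Eul k (BigJ Finset.univ p (F T)) x := by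
          simp only [HS, HS_apply, JS_apply, LS_apply, BigJ, BigJ_apply, Nat.add_sub_cancel, Function.iterate_one, zero_add]
      _ = BigJ Finset.univ p (fun y => ∑ l, Eul l (F T) y) x :=
          bigJ_comm Finset.univ p (hF T) hx
      _ = JS (p+1) (HS 1 F) T x := by
          simp only [HS, HS_apply, JS_apply, LS_apply, BigJ, BigJ_apply, Nat.add_sub_cancel, Function.iterate_one, zero_add]
  · calc HS 1 (KS (p+1) F) T x
        = ∑ k, Eul k (BigJ T p (F T)) x := by
          simp only [HS, HS_apply, KS_apply, IS_apply, MS_apply, BigJ, BigJ_apply, Nat.add_sub_cancel, Function.iterate_one, zero_add]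
      _ = BigJ T p (fun y => ∑ l, Eul l (F T) y) x :=
          bigJ_comm T p (hF T) hx
      _ = KS (p+1) (HS 1 F) T x := by
          simp only [HS, HS_apply, KS_apply, IS_apply, MS_apply, BigJ, BigJ_apply, Nat.add_sub_cancel, Function.iterate_one, zero_add]
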